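/- arXiv:1905.07670 — 3 statements merged into one kernel-verified Lean document; each statement's English description precedes it below -/
import Mathlib

section
/- In the crowdsourcing problem with known accuracies and prior c = 1/2, the randomized decision rule δ*₁/₂ that decides 1 if Σᵢ wᵢ*·yᵢ > Σᵢ wᵢ*/2, decides 0 if Σᵢ wᵢ*·yᵢ < Σᵢ wᵢ*/2, and outputs a fair coin flip U on equality (where wᵢ* = 2·log(γᵢ/(1−γᵢ))) has risk constant in θ: R(δ*₁/₂, 0) = R(δ*₁/₂, 1). -/
/-!
Complementing every vote, `y ↦ !y`, is a bijection of the sample space that carries the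
likelihood of `y` under `θ = 0` to the likelihood of `!y` under `θ = 1`, and sends the
weighted vote `S` to `W - S`, where `W` is the total weight. Since the threshold is `W / 2`,
the rule errs at `!y` under `θ = 1` exactly when it errs at `y` under `θ = 0`, ties included.
-/

open Finset

lemma involutive_pi_not {ι : Type*} : Function.Involutive fun y : ι → Bool => fun i => !y i :=
  fun y => by simp

section

variable {ι : Type*} [Fintype ι]

lemma prod_ite_not_eq_true {M : Type*} [CommMonoid M] (y : ι → Bool) (a b : ι → M) :
    (∏ i, if (!y i) = true then a i else b i) = ∏ i, if y i = false then a i else b i := by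
  simp

lemma sum_ite_not_eq_sub {G : Type*} [AddCommGroup G] (y : ι → Bool) (w : ι → G) :
    (∑ i, if !y i then w i else 0) = ∑ i, w i - ∑ i, if y i then w i else 0 := by
  rw [← sum_sub_distrib]
  refine sum_congr rfl fun i _ => ?_
  cases y i <;> simp

theorem half_threshold_rule_risk_false_eq_risk_true [DecidableEq ι] (γ w : ι → ℝ) :
    (∑ y : ι → Bool,
        (∏ i, if y i = false then γ i else 1 - γ i) *
          (if (∑ i, if y i then w i else 0) > (∑ i, w i) / 2 then 1
            else if (∑ i, if y i then w i else 0) = (∑ i, w i) / 2 then 1 / 2 else 0)) =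
    (∑ y : ι → Bool,
        (∏ i, if y i = true then γ i else 1 - γ i) *
          (if (∑ i, if y i then w i else 0) < (∑ i, w i) / 2 then 1
            else if (∑ i, if y i then w i else 0) = (∑ i, w i) / 2 then 1 / 2 else 0)) := by
  refine Fintype.sum_bijective _ involutive_pi_not.bijective _ _ fun y => ?_
  rw [prod_ite_not_eq_true, sum_ite_not_eq_sub]
  have hlt : (∑ i, w i) - (∑ i, if y i then w i else 0) < (∑ i, w i) / 2 ↔
      (∑ i, if y i then w i else 0) > (∑ i, w i) / 2 := by
    constructor <;> intro <;> linarith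
  have heq : (∑ i, w i) - (∑ i, if y i then w i else 0) = (∑ i, w i) / 2 ↔
      (∑ i, if y i then w i else 0) = (∑ i, w i) / 2 := by
    constructor <;> intro <;> linarith
  simp only [hlt, heq]

end

theorem half_prior_bayes_rule_constant_risk_general (n : ℕ) (γ : Fin n → ℝ) :
    -- risk at θ = 0
    (∑ y : Fin n → Bool,
        (∏ i, if y i = false then γ i else 1 - γ i) *
          (if (∑ i, if y i then 2 * Real.log (γ i / (1 - γ i)) else 0) >
              (∑ i, 2 * Real.log (γ i / (1 - γ i))) / 2 then 1
            else if (∑ i, if y i then 2 * Real.log (γ i / (1 - γ i)) else 0) =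
              (∑ i, 2 * Real.log (γ i / (1 - γ i))) / 2 then 1 / 2 else 0)) =
    -- risk at θ = 1
    (∑ y : Fin n → Bool,
        (∏ i, if y i = true then γ i else 1 - γ i) *
          (if (∑ i, if y i then 2 * Real.log (γ i / (1 - γ i)) else 0) <
              (∑ i, 2 * Real.log (γ i / (1 - γ i))) / 2 then 1
            else if (∑ i, if y i then 2 * Real.log (γ i / (1 - γ i)) else 0) =
              (∑ i, 2 * Real.log (γ i / (1 - γ i))) / 2 then 1 / 2 else 0)) :=
  half_threshold_rule_risk_false_eq_risk_true γ fun i => 2 * Real.log (γ i / (1 - γ i))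

/-- in the crowdsourcing problem with known accuracies and prior `c = 1/2`,
the randomized rule `δ*₁/₂` (decide 1 if `Σᵢ wᵢ* yᵢ > Σᵢ wᵢ*/2`, decide 0 if `<`, and
flip a fair coin on equality, where `wᵢ* = 2 log(γᵢ/(1−γᵢ))`) has risk constant in `θ`:
`R(δ*₁/₂, 0) = R(δ*₁/₂, 1)`.  Here, given `θ`, `P(Yᵢ = θ) = γᵢ`, the risk at `θ` is the
probability of an incorrect decision, and on ties the coin contributes error `1/2`. -/
theorem half_prior_bayes_rule_constant_risk (n : ℕ) (γ : Fin n → ℝ)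
    (hγ : ∀ i, 0 < γ i ∧ γ i < 1) :
    -- risk at θ = 0
    (∑ y : Fin n → Bool,
        (∏ i, if y i = false then γ i else 1 - γ i) *
          (if (∑ i, if y i then 2 * Real.log (γ i / (1 - γ i)) else 0) >
              (∑ i, 2 * Real.log (γ i / (1 - γ i))) / 2 then 1
            else if (∑ i, if y i then 2 * Real.log (γ i / (1 - γ i)) else 0) =
              (∑ i, 2 * Real.log (γ i / (1 - γ i))) / 2 then 1 / 2 else 0)) =
    -- risk at θ = 1
    (∑ y : Fin n → Bool,
        (∏ i, if y i = true then γ i else 1 - γ i) *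
          (if (∑ i, if y i then 2 * Real.log (γ i / (1 - γ i)) else 0) <
              (∑ i, 2 * Real.log (γ i / (1 - γ i))) / 2 then 1
            else if (∑ i, if y i then 2 * Real.log (γ i / (1 - γ i)) else 0) =
              (∑ i, 2 * Real.log (γ i / (1 - γ i))) / 2 then 1 / 2 else 0)) :=
  half_prior_bayes_rule_constant_risk_general n γ
end

section
/- With Beta(αᵢ,βᵢ) priors on the unknown accuracies γᵢ (independent of each other and of θ), the marginal posterior odds satisfy P(θ=1|y)/P(θ=0|y) > 1 if and only if Σᵢ wᵢ**·yᵢ > log((1−c)/c) + Σᵢ wᵢ**/2, where wᵢ** = 2·log(αᵢ/βᵢ). -/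
/-!
Conditionally on θ the votes are independent and each accuracy γᵢ is integrated out on its
own. Since the Beta(α, β) mean of γ is α / (α + β), voter i contributes the factor
α^y β^(1-y) / (α + β) under θ = 1 and β^y α^(1-y) / (α + β) under θ = 0, whose log-ratio is
(2y - 1) log(α / β). Taking logarithms of the posterior odds turns the product over voters
into the linear decision rule.
-/

open Real MeasureTheory ProbabilityTheory

namespace ProbabilityTheory

lemma integral_rpow_mul_one_sub_rpow {a b : ℝ} (ha : 0 < a) (hb : 0 < b) :
    ∫ x in (0:ℝ)..1, x ^ (a - 1) * (1 - x) ^ (b - 1) = beta a b := by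
  have hcomplex :
      Complex.betaIntegral a b = ↑(∫ x in (0:ℝ)..1, x ^ (a - 1) * (1 - x) ^ (b - 1)) := by
    rw [Complex.betaIntegral, ← intervalIntegral.integral_ofReal]
    refine intervalIntegral.integral_congr fun x hx => ?_
    rw [Set.uIcc_of_le zero_le_one] at hx
    push_cast
    rw [Complex.ofReal_cpow hx.1, Complex.ofReal_cpow (sub_nonneg.2 hx.2)]
    push_cast
    ring
  rw [beta_eq_betaIntegralReal a b ha hb, hcomplex, Complex.ofReal_re]

lemma beta_add_one_left {a b : ℝ} (ha : 0 < a) (hb : 0 < b) :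
    beta (a + 1) b = a / (a + b) * beta a b := by
  have hab : 0 < a + b := add_pos ha hb
  rw [beta, beta, Gamma_add_one ha.ne', add_right_comm, Gamma_add_one hab.ne']
  have := (Gamma_pos_of_pos hab).ne'
  field_simp

lemma beta_comm (a b : ℝ) : beta a b = beta b a := by
  rw [beta, beta, mul_comm, add_comm]

lemma beta_add_one_right {a b : ℝ} (ha : 0 < a) (hb : 0 < b) :
    beta a (b + 1) = b / (a + b) * beta a b := by
  rw [beta_comm, beta_add_one_left hb ha, add_comm b, beta_comm]

end ProbabilityTheory

lemma integral_rpow_mul_one_sub_rpow_mul_betaDensity {a b s t : ℝ}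
    (has : 0 < a + s) (hbt : 0 < b + t) :
    ∫ γ in (0:ℝ)..1, γ ^ s * (1 - γ) ^ t *
        (Gamma (a + b) / (Gamma a * Gamma b) * γ ^ (a - 1) * (1 - γ) ^ (b - 1)) =
      beta (a + s) (b + t) / beta a b := by
  have hpointwise : ∀ᵐ γ ∂volume, γ ∈ Set.uIoc (0:ℝ) 1 →
      γ ^ s * (1 - γ) ^ t *
        (Gamma (a + b) / (Gamma a * Gamma b) * γ ^ (a - 1) * (1 - γ) ^ (b - 1)) =
      (beta a b)⁻¹ * (γ ^ (a + s - 1) * (1 - γ) ^ (b + t - 1)) := by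
    -- `rpow_add` needs a positive base, so the null endpoint `γ = 1` is discarded
    filter_upwards [volume.ae_ne 1] with γ hγ1 hγ
    rw [Set.uIoc_of_le zero_le_one] at hγ
    have hγ' : 0 < 1 - γ := sub_pos.2 (lt_of_le_of_ne hγ.2 hγ1)
    rw [show a + s - 1 = s + (a - 1) by ring, show b + t - 1 = t + (b - 1) by ring,
      rpow_add hγ.1, rpow_add hγ', beta, inv_div]
    ring
  rw [intervalIntegral.integral_congr_ae hpointwise, intervalIntegral.integral_const_mul,
    integral_rpow_mul_one_sub_rpow has hbt, inv_mul_eq_div]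

lemma integral_bernoulli_mul_betaDensity {a b y : ℝ} (ha : 0 < a) (hb : 0 < b)
    (hy : y = 0 ∨ y = 1) :
    ∫ γ in (0:ℝ)..1, γ ^ y * (1 - γ) ^ (1 - y) *
        (Gamma (a + b) / (Gamma a * Gamma b) * γ ^ (a - 1) * (1 - γ) ^ (b - 1)) =
      a ^ y * b ^ (1 - y) / (a + b) := by
  have hbeta := (beta_pos ha hb).ne'
  rcases hy with rfl | rfl
  · rw [integral_rpow_mul_one_sub_rpow_mul_betaDensity (by linarith) (by linarith)]
    simp only [add_zero, sub_zero, rpow_zero, rpow_one, beta_add_one_right ha hb]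
    field_simp
  · rw [integral_rpow_mul_one_sub_rpow_mul_betaDensity (by linarith) (by linarith)]
    simp only [add_zero, sub_self, rpow_zero, rpow_one, beta_add_one_left ha hb]
    field_simp

lemma log_bernoulli_odds {a b : ℝ} (ha : 0 < a) (hb : 0 < b) (y : ℝ) :
    log (a ^ y * b ^ (1 - y) / (a + b)) - log (b ^ y * a ^ (1 - y) / (a + b)) =
      (2 * y - 1) * log (a / b) := by
  have hab : 0 < a + b := add_pos ha hb
  rw [log_div (by positivity) hab.ne', log_div (by positivity) hab.ne',
    log_mul (by positivity) (by positivity), log_mul (by positivity) (by positivity),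
    log_rpow ha, log_rpow hb, log_rpow ha, log_rpow hb, log_div ha.ne' hb.ne']
  ring

lemma one_lt_odds_iff {c P Q : ℝ} (hc0 : 0 < c) (hc1 : c < 1) (hP : 0 < P) (hQ : 0 < Q) :
    1 < c * P / ((1 - c) * Q) ↔ log ((1 - c) / c) < log P - log Q := by
  have hc1' : 0 < 1 - c := sub_pos.2 hc1
  rw [one_lt_div (by positivity), ← log_lt_log_iff (by positivity) (by positivity),
    log_mul hc1'.ne' hQ.ne', log_mul hc0.ne' hP.ne', log_div hc1'.ne' hc0.ne']
  constructor <;> intro h <;> linarith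

lemma integral_bernoulli_swap_mul_betaDensity {a b y : ℝ} (ha : 0 < a) (hb : 0 < b)
    (hy : y = 0 ∨ y = 1) :
    ∫ γ in (0:ℝ)..1, (1 - γ) ^ y * γ ^ (1 - y) *
        (Gamma (a + b) / (Gamma a * Gamma b) * γ ^ (a - 1) * (1 - γ) ^ (b - 1)) =
      b ^ y * a ^ (1 - y) / (a + b) := by
  have hy' : 1 - y = 0 ∨ 1 - y = 1 := by rcases hy with rfl | rfl <;> norm_num
  have h := integral_bernoulli_mul_betaDensity ha hb hy'
  rw [sub_sub_cancel] at h
  rw [mul_comm (b ^ y), ← h]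
  exact intervalIntegral.integral_congr fun γ _ => by ring

/-- with `Beta(αᵢ,βᵢ)` priors on the unknown accuracies `γᵢ` (independent
of each other and of `θ`), the marginal posterior odds satisfy
`P(θ=1∣y)/P(θ=0∣y) > 1` iff `Σᵢ wᵢ** yᵢ > log((1−c)/c) + Σᵢ wᵢ**/2`, where
`wᵢ** = 2 log(αᵢ/βᵢ)`.  The marginal likelihoods integrate the accuracies out against
the Beta densities. -/
theorem beta_posterior_odds_iff (n : ℕ) (c : ℝ) (hc0 : 0 < c) (hc1 : c < 1)
    (α β : Fin n → ℝ) (hα : ∀ i, 0 < α i) (hβ : ∀ i, 0 < β i)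
    (y : Fin n → ℝ) (hy : ∀ i, y i = 0 ∨ y i = 1) :
    (c * ∏ i, ∫ γ in (0:ℝ)..1,
          γ ^ (y i) * (1 - γ) ^ (1 - y i) *
            (Real.Gamma (α i + β i) / (Real.Gamma (α i) * Real.Gamma (β i)) *
              γ ^ (α i - 1) * (1 - γ) ^ (β i - 1))) /
        ((1 - c) * ∏ i, ∫ γ in (0:ℝ)..1,
          (1 - γ) ^ (y i) * γ ^ (1 - y i) *
            (Real.Gamma (α i + β i) / (Real.Gamma (α i) * Real.Gamma (β i)) *
              γ ^ (α i - 1) * (1 - γ) ^ (β i - 1))) > 1 ↔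
      ∑ i, 2 * Real.log (α i / β i) * y i >
        Real.log ((1 - c) / c) + ∑ i, 2 * Real.log (α i / β i) / 2 := by
  have hαβ : ∀ i, 0 < α i + β i := fun i => add_pos (hα i) (hβ i)
  have hp : ∀ i, 0 < α i ^ y i * β i ^ (1 - y i) / (α i + β i) := fun i =>
    div_pos (mul_pos (rpow_pos_of_pos (hα i) _) (rpow_pos_of_pos (hβ i) _)) (hαβ i)
  have hq : ∀ i, 0 < β i ^ y i * α i ^ (1 - y i) / (α i + β i) := fun i =>
    div_pos (mul_pos (rpow_pos_of_pos (hβ i) _) (rpow_pos_of_pos (hα i) _)) (hαβ i)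
  simp only [fun i => integral_bernoulli_mul_betaDensity (hα i) (hβ i) (hy i),
    fun i => integral_bernoulli_swap_mul_betaDensity (hα i) (hβ i) (hy i)]
  rw [gt_iff_lt, one_lt_odds_iff hc0 hc1 (Finset.prod_pos fun i _ => hp i)
      (Finset.prod_pos fun i _ => hq i), log_prod (fun i _ => (hp i).ne'),
    log_prod (fun i _ => (hq i).ne'), ← Finset.sum_sub_distrib]
  simp only [fun i => log_bernoulli_odds (hα i) (hβ i) (y i)]
  have hsum : ∑ i, (2 * y i - 1) * log (α i / β i) =
      ∑ i, 2 * log (α i / β i) * y i - ∑ i, 2 * log (α i / β i) / 2 := by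
    rw [← Finset.sum_sub_distrib]
    exact Finset.sum_congr rfl fun i _ => by ring
  rw [hsum, gt_iff_lt, lt_sub_iff_add_lt]
end

section
/- In the crowdsourcing problem with unknown accuracies, any decision rule δ such that for some observation y the output δ(y,U) is a constant d (neither U nor 1−U) has sup-risk equal to 1; hence a rule is minimax if and only if for every y, δ(y,U) equals U or 1−U. -/
/-!
A rule that ignores the coin at some observation `y`, say `δ(y,·) ≡ d`, is beaten by the
parameter `θ = !d` with `γᵢ = 1` if `yᵢ = θ` and `γᵢ = 0` otherwise: under it `y` is observed
with probability one and the rule always errs, so its maximal risk is `1`. A rule with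
`δ(y,U) ∈ {U, 1 - U}` for every `y` errs with probability exactly `1/2` whatever the
parameter. Since every map `Bool → Bool` is the identity, negation or constant, the minimax
value is `1/2` and is attained exactly by the coin-like rules.
-/

open scoped BigOperators Classical

/-- `P(Y = y ∣ θ, γ)`: given `(θ,γ)` the `Yᵢ` are independent with
`P(Yᵢ = θ ∣ θ, γᵢ) = γᵢ`. -/
noncomputable def crowdProb (n : ℕ) (θ : Bool) (γ : Fin n → ℝ) (y : Fin n → Bool) : ℝ :=
  ∏ i, if y i = θ then γ i else 1 - γ i

/-- The risk `R(δ,(θ,γ)) = P(δ(Y,U) ≠ θ ∣ θ, γ)` of a decision rule using an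
independent fair coin `U`. -/
noncomputable def crowdRisk (n : ℕ) (δ : (Fin n → Bool) → Bool → Bool)
    (θ : Bool) (γ : Fin n → ℝ) : ℝ :=
  ∑ y : Fin n → Bool, ∑ u : Bool,
    crowdProb n θ γ y * (1 / 2) * (if δ y u = θ then 0 else 1)

open Finset

noncomputable def coinErrorProb (f : Bool → Bool) (θ : Bool) : ℝ :=
  ∑ u : Bool, 1 / 2 * (if f u = θ then 0 else 1)

theorem coinErrorProb_nonneg (f : Bool → Bool) (θ : Bool) : 0 ≤ coinErrorProb f θ := by
  unfold coinErrorProb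
  rw [Fintype.sum_bool]
  split_ifs <;> norm_num

theorem coinErrorProb_le_one (f : Bool → Bool) (θ : Bool) : coinErrorProb f θ ≤ 1 := by
  unfold coinErrorProb
  rw [Fintype.sum_bool]
  split_ifs <;> norm_num

theorem coinErrorProb_of_coinLike {f : Bool → Bool}
    (hf : (∀ u, f u = u) ∨ (∀ u, f u = !u)) (θ : Bool) : coinErrorProb f θ = 1 / 2 := by
  unfold coinErrorProb
  rcases hf with hf | hf <;> cases θ <;> simp [hf]

theorem coinErrorProb_not_of_const {f : Bool → Bool} {d : Bool} (hf : ∀ u, f u = d) :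
    coinErrorProb f (!d) = 1 := by
  unfold coinErrorProb
  cases d <;> simp [hf]

theorem Bool.coinLike_or_const (f : Bool → Bool) :
    ((∀ u, f u = u) ∨ (∀ u, f u = !u)) ∨ ∃ d, ∀ u, f u = d := by
  revert f
  decide

theorem ite_one_zero_mem_Icc (p : Prop) [Decidable p] :
    (if p then (1 : ℝ) else 0) ∈ Set.Icc (0 : ℝ) 1 := by
  split_ifs <;> norm_num

section CrowdRisk

variable {n : ℕ}

theorem crowdProb_nonneg (θ : Bool) {γ : Fin n → ℝ}
    (hγ : ∀ i, γ i ∈ Set.Icc (0 : ℝ) 1) (y : Fin n → Bool) : 0 ≤ crowdProb n θ γ y :=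
  prod_nonneg fun i _ => by
    obtain ⟨h0, h1⟩ := hγ i
    split_ifs <;> linarith

theorem sum_crowdProb (θ : Bool) (γ : Fin n → ℝ) : ∑ y, crowdProb n θ γ y = 1 := by
  unfold crowdProb
  rw [← Fintype.prod_sum fun i b => if b = θ then γ i else 1 - γ i]
  exact prod_eq_one fun i _ => by cases θ <;> simp

theorem crowdProb_pointMass (θ : Bool) (y : Fin n → Bool) :
    crowdProb n θ (fun i => if y i = θ then 1 else 0) y = 1 :=
  prod_eq_one fun i _ => by by_cases hi : y i = θ <;> simp [hi]

theorem crowdRisk_eq_sum (δ : (Fin n → Bool) → Bool → Bool) (θ : Bool)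
    (γ : Fin n → ℝ) :
    crowdRisk n δ θ γ = ∑ y, crowdProb n θ γ y * coinErrorProb (δ y) θ := by
  simp only [crowdRisk, coinErrorProb, mul_sum, mul_assoc]

theorem crowdRisk_le_one (δ : (Fin n → Bool) → Bool → Bool) (θ : Bool)
    {γ : Fin n → ℝ} (hγ : ∀ i, γ i ∈ Set.Icc (0 : ℝ) 1) : crowdRisk n δ θ γ ≤ 1 :=
  calc crowdRisk n δ θ γ ≤ ∑ y, crowdProb n θ γ y := by
        rw [crowdRisk_eq_sum]
        exact sum_le_sum fun y _ =>
          mul_le_of_le_one_right (crowdProb_nonneg θ hγ y) (coinErrorProb_le_one _ _)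
    _ = 1 := sum_crowdProb θ γ

theorem crowdRisk_of_coinLike {δ : (Fin n → Bool) → Bool → Bool}
    (hδ : ∀ y, (∀ u, δ y u = u) ∨ (∀ u, δ y u = !u)) (θ : Bool) (γ : Fin n → ℝ) :
    crowdRisk n δ θ γ = 1 / 2 := by
  simp only [crowdRisk_eq_sum, coinErrorProb_of_coinLike (hδ _), ← sum_mul, sum_crowdProb,
    one_mul]

theorem crowdRisk_pointMass_of_const {δ : (Fin n → Bool) → Bool → Bool} {y : Fin n → Bool}
    {d : Bool} (hd : ∀ u, δ y u = d) :
    crowdRisk n δ (!d) (fun i => if y i = !d then 1 else 0) = 1 := by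
  have hγ : ∀ i, _ := fun i => ite_one_zero_mem_Icc (y i = !d)
  refine (crowdRisk_le_one δ _ hγ).antisymm ?_
  calc (1 : ℝ) = crowdProb n (!d) _ y * coinErrorProb (δ y) (!d) := by
        rw [crowdProb_pointMass, coinErrorProb_not_of_const hd, one_mul]
    _ ≤ crowdRisk n δ (!d) _ := by
        rw [crowdRisk_eq_sum]
        exact single_le_sum (f := fun y' => crowdProb n (!d) _ y' * coinErrorProb (δ y') (!d))
          (fun y' _ => mul_nonneg (crowdProb_nonneg _ hγ y') (coinErrorProb_nonneg _ _))
          (mem_univ y)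

end CrowdRisk

section MaxRisk

variable {n : ℕ}

abbrev Accuracies (n : ℕ) : Type := {g : Fin n → ℝ // ∀ i, g i ∈ Set.Icc (0:ℝ) 1}

instance : Nonempty (Accuracies n) :=
  ⟨⟨0, fun _ => Set.left_mem_Icc.mpr zero_le_one⟩⟩

noncomputable def maxRisk (n : ℕ) (δ : (Fin n → Bool) → Bool → Bool) : ℝ :=
  ⨆ θ : Bool, ⨆ γ : Accuracies n, crowdRisk n δ θ γ.1

theorem maxRisk_le_one (δ : (Fin n → Bool) → Bool → Bool) : maxRisk n δ ≤ 1 :=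
  ciSup_le fun θ => ciSup_le fun γ => crowdRisk_le_one δ θ γ.2

theorem crowdRisk_le_maxRisk (δ : (Fin n → Bool) → Bool → Bool) (θ : Bool)
    (γ : Accuracies n) : crowdRisk n δ θ γ.1 ≤ maxRisk n δ := by
  have hbddγ : ∀ θ', BddAbove (Set.range fun γ' : Accuracies n => crowdRisk n δ θ' γ'.1) :=
    fun θ' => ⟨1, Set.forall_mem_range.mpr fun γ' => crowdRisk_le_one δ θ' γ'.2⟩
  exact (le_ciSup (hbddγ θ) γ).trans
    (le_ciSup (f := fun θ' => ⨆ γ' : Accuracies n, crowdRisk n δ θ' γ'.1)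
      (Set.finite_range _).bddAbove θ)

theorem maxRisk_of_coinLike {δ : (Fin n → Bool) → Bool → Bool}
    (hδ : ∀ y, (∀ u, δ y u = u) ∨ (∀ u, δ y u = !u)) : maxRisk n δ = 1 / 2 := by
  simp only [maxRisk, crowdRisk_of_coinLike hδ, ciSup_const]

theorem maxRisk_of_const {δ : (Fin n → Bool) → Bool → Bool} {y : Fin n → Bool} {d : Bool}
    (hd : ∀ u, δ y u = d) : maxRisk n δ = 1 := by
  refine (maxRisk_le_one δ).antisymm ?_
  calc (1 : ℝ) = crowdRisk n δ (!d) (fun i => if y i = !d then 1 else 0) :=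
        (crowdRisk_pointMass_of_const hd).symm
    _ ≤ maxRisk n δ := crowdRisk_le_maxRisk δ (!d) ⟨_, fun i => ite_one_zero_mem_Icc _⟩

theorem half_le_maxRisk (δ : (Fin n → Bool) → Bool → Bool) : 1 / 2 ≤ maxRisk n δ := by
  by_cases hδ : ∀ y, (∀ u, δ y u = u) ∨ (∀ u, δ y u = !u)
  · exact (maxRisk_of_coinLike hδ).ge
  · obtain ⟨y, hy⟩ := not_forall.mp hδ
    obtain ⟨d, hd⟩ := (Bool.coinLike_or_const (δ y)).resolve_left hy
    rw [maxRisk_of_const hd]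
    norm_num

theorem iInf_maxRisk : ⨅ δ, maxRisk n δ = 1 / 2 :=
  le_antisymm
    ((ciInf_le ⟨1 / 2, Set.forall_mem_range.mpr half_le_maxRisk⟩ fun _ u => u).trans_eq
      (maxRisk_of_coinLike fun _ => Or.inl fun _ => rfl))
    (le_ciInf half_le_maxRisk)

end MaxRisk

/-- over `Θ = {0,1} × [0,1]ⁿ`, any decision rule whose output at some
observation `y` is a constant `d` (neither `U` nor `1−U`) has sup-risk equal to `1`;
hence a rule is minimax iff for every `y` its output is either `U` or `1−U`. -/
theorem minimax_iff_coin_like (n : ℕ) (δ : (Fin n → Bool) → Bool → Bool) :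
    ((∃ (y : Fin n → Bool) (d : Bool), ∀ u, δ y u = d) →
      (⨆ θ : Bool, ⨆ γ : {g : Fin n → ℝ // ∀ i, g i ∈ Set.Icc (0:ℝ) 1},
          crowdRisk n δ θ γ.1) = 1) ∧
    ((⨆ θ : Bool, ⨆ γ : {g : Fin n → ℝ // ∀ i, g i ∈ Set.Icc (0:ℝ) 1},
          crowdRisk n δ θ γ.1) =
        (⨅ δ' : (Fin n → Bool) → Bool → Bool,
          ⨆ θ : Bool, ⨆ γ : {g : Fin n → ℝ // ∀ i, g i ∈ Set.Icc (0:ℝ) 1},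
            crowdRisk n δ' θ γ.1) ↔
      ∀ y : Fin n → Bool, (∀ u, δ y u = u) ∨ (∀ u, δ y u = !u)) := by
  change ((∃ y d, ∀ u, δ y u = d) → maxRisk n δ = 1) ∧
    (maxRisk n δ = ⨅ δ', maxRisk n δ' ↔ ∀ y, (∀ u, δ y u = u) ∨ (∀ u, δ y u = !u))
  rw [iInf_maxRisk]
  refine ⟨fun ⟨y, d, hd⟩ => maxRisk_of_const hd, fun hmin y => ?_, maxRisk_of_coinLike⟩
  refine (Bool.coinLike_or_const (δ y)).resolve_right fun ⟨d, hd⟩ => ?_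
  rw [maxRisk_of_const hd] at hmin
  norm_num at hmin
end
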